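/- At λ = 3/4, the 8 points [±1:±1:±1:±1] ∈ ℙ³ (i.e., the 16 sign choices modulo the overall sign, giving 8 projective points) are singular points of the Cefalú quartic {p_{3/4} = 0}, and each is an A₁ (node) singularity: the Hessian matrix of p_{3/4} restricted to a local affine chart at each such point is nondegenerate. -/
import Mathlib


open scoped BigOperators

/-- The Cefalú family of quartic polynomials. -/
noncomputable def cefalu (lam : ℂ) (z : Fin 4 → ℂ) : ℂ :=
  (∑ i, z i ^ 4) - (lam / 3) * (∑ i, z i ^ 2) ^ 2

/-- Partial derivative of `cefalu lam` in the `i`-th coordinate. -/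
noncomputable def cefaluPartial (lam : ℂ) (z : Fin 4 → ℂ) (i : Fin 4) : ℂ :=
  deriv (fun t => cefalu lam (Function.update z i t)) (z i)

/-- The Cefalú quartic at `λ = 3/4` in the affine chart `{z₀ = 1}`. -/
noncomputable def cefaluChart (w : Fin 3 → ℂ) : ℂ :=
  cefalu (3 / 4) (Fin.cons 1 w)

/-- First partial derivative of the chart function. -/
noncomputable def chartPartial (w : Fin 3 → ℂ) (j : Fin 3) : ℂ :=
  deriv (fun s => cefaluChart (Function.update w j s)) (w j)

/-- Hessian matrix of the chart function. -/
noncomputable def chartHessian (w : Fin 3 → ℂ) : Matrix (Fin 3) (Fin 3) ℂ :=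
  Matrix.of fun i j =>
    deriv (fun t => chartPartial (Function.update w i t) j) (w i)

/-- Points `[±1:±1:±1:±1]`. -/
def fourSignPoints : Set (Fin 4 → ℂ) :=
  {z | ∀ i, z i = 1 ∨ z i = -1}

lemma derivQ (a b c t : ℂ) :
    deriv (fun t : ℂ => (t ^ 4 + a) - b * (t ^ 2 + c) ^ 2) t
      = 4 * t ^ 3 - b * (2 * (t ^ 2 + c) * (2 * t)) := by
  have h : HasDerivAt (fun t : ℂ => (t ^ 4 + a) - b * (t ^ 2 + c) ^ 2)
      ((4 : ℕ) * t ^ 3 - b * ((2 : ℕ) * (t ^ 2 + c) ^ 1 * ((2 : ℕ) * t ^ 1))) t :=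
    ((hasDerivAt_pow 4 t).add_const a).sub
      ((((hasDerivAt_pow 2 t).add_const c).pow 2).const_mul b)
  rw [h.deriv]; push_cast; ring

lemma derivDiag (a t : ℂ) :
    deriv (fun t : ℂ => 4 * t ^ 3 - t * (a + t ^ 2)) t
      = 12 * t ^ 2 - (a + t ^ 2) - t * (2 * t) := by
  have h : HasDerivAt (fun t : ℂ => 4 * t ^ 3 - t * (a + t ^ 2))
      (4 * ((3 : ℕ) * t ^ 2) - (1 * (a + t ^ 2) + t * ((2 : ℕ) * t ^ 1))) t :=
    (((hasDerivAt_pow 3 t).const_mul 4)).sub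
      ((hasDerivAt_id t).mul ((hasDerivAt_pow 2 t).const_add a))
  rw [h.deriv]; push_cast; ring

lemma derivOff (b c a t : ℂ) :
    deriv (fun t : ℂ => b - c * (a + t ^ 2)) t = -c * (2 * t) := by
  have h : HasDerivAt (fun t : ℂ => b - c * (a + t ^ 2))
      (0 - c * ((2 : ℕ) * t ^ 1)) t :=
    (hasDerivAt_const t b).sub (((hasDerivAt_pow 2 t).const_add a).const_mul c)
  rw [h.deriv]; push_cast; ring

lemma cefaluPartial_eq (lam : ℂ) (z : Fin 4 → ℂ) (i : Fin 4) :
    cefaluPartial lam z i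
      = 4 * z i ^ 3 - (lam / 3) * (2 * (z i ^ 2 + (∑ j, z j ^ 2 - z i ^ 2)) * (2 * z i)) := by
  fin_cases i
  · show cefaluPartial lam z 0 = 4 * z 0 ^ 3 - lam / 3 * (2 * (z 0 ^ 2 + (∑ j, z j ^ 2 - z 0 ^ 2)) * (2 * z 0))
    rw [cefaluPartial,
      show (fun t => cefalu lam (Function.update z 0 t))
        = fun t : ℂ => (t ^ 4 + (z 1 ^ 4 + z 2 ^ 4 + z 3 ^ 4))
            - (lam / 3) * (t ^ 2 + (z 1 ^ 2 + z 2 ^ 2 + z 3 ^ 2)) ^ 2 from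
        funext fun t => by simp [cefalu, Fin.sum_univ_four, Function.update]; try ring,
      derivQ]
    rw [Fin.sum_univ_four]; ring
  · show cefaluPartial lam z 1 = 4 * z 1 ^ 3 - lam / 3 * (2 * (z 1 ^ 2 + (∑ j, z j ^ 2 - z 1 ^ 2)) * (2 * z 1))
    rw [cefaluPartial,
      show (fun t => cefalu lam (Function.update z 1 t))
        = fun t : ℂ => (t ^ 4 + (z 0 ^ 4 + z 2 ^ 4 + z 3 ^ 4))
            - (lam / 3) * (t ^ 2 + (z 0 ^ 2 + z 2 ^ 2 + z 3 ^ 2)) ^ 2 from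
        funext fun t => by simp [cefalu, Fin.sum_univ_four, Function.update]; try ring,
      derivQ]
    rw [Fin.sum_univ_four]; ring
  · show cefaluPartial lam z 2 = 4 * z 2 ^ 3 - lam / 3 * (2 * (z 2 ^ 2 + (∑ j, z j ^ 2 - z 2 ^ 2)) * (2 * z 2))
    rw [cefaluPartial,
      show (fun t => cefalu lam (Function.update z 2 t))
        = fun t : ℂ => (t ^ 4 + (z 0 ^ 4 + z 1 ^ 4 + z 3 ^ 4))
            - (lam / 3) * (t ^ 2 + (z 0 ^ 2 + z 1 ^ 2 + z 3 ^ 2)) ^ 2 from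
        funext fun t => by simp [cefalu, Fin.sum_univ_four, Function.update]; try ring,
      derivQ]
    rw [Fin.sum_univ_four]; ring
  · show cefaluPartial lam z 3 = 4 * z 3 ^ 3 - lam / 3 * (2 * (z 3 ^ 2 + (∑ j, z j ^ 2 - z 3 ^ 2)) * (2 * z 3))
    rw [cefaluPartial,
      show (fun t => cefalu lam (Function.update z 3 t))
        = fun t : ℂ => (t ^ 4 + (z 0 ^ 4 + z 1 ^ 4 + z 2 ^ 4))
            - (lam / 3) * (t ^ 2 + (z 0 ^ 2 + z 1 ^ 2 + z 2 ^ 2)) ^ 2 from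
        funext fun t => by simp [cefalu, Fin.sum_univ_four, Function.update]; try ring,
      derivQ]
    rw [Fin.sum_univ_four]; ring

lemma finCons0 (w : Fin 3 → ℂ) : (Fin.cons (1:ℂ) w : Fin 4 → ℂ) 0 = 1 := rfl
lemma finCons1 (w : Fin 3 → ℂ) : (Fin.cons (1:ℂ) w : Fin 4 → ℂ) 1 = w 0 := rfl
lemma finCons2 (w : Fin 3 → ℂ) : (Fin.cons (1:ℂ) w : Fin 4 → ℂ) 2 = w 1 := rfl
lemma finCons3 (w : Fin 3 → ℂ) : (Fin.cons (1:ℂ) w : Fin 4 → ℂ) 3 = w 2 := rfl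

lemma cefaluChart_eq (w : Fin 3 → ℂ) :
    cefaluChart w = (1 + (w 0 ^ 4 + w 1 ^ 4 + w 2 ^ 4))
      - (1/4) * (1 + (w 0 ^ 2 + w 1 ^ 2 + w 2 ^ 2)) ^ 2 := by
  rw [cefaluChart, cefalu, Fin.sum_univ_four, Fin.sum_univ_four,
    finCons0, finCons1, finCons2, finCons3]
  ring

lemma chartPartial_eq (w : Fin 3 → ℂ) (j : Fin 3) :
    chartPartial w j = 4 * w j ^ 3 - w j * (1 + (w 0 ^ 2 + w 1 ^ 2 + w 2 ^ 2)) := by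
  fin_cases j
  · show chartPartial w 0 = 4 * w 0 ^ 3 - w 0 * (1 + (w 0 ^ 2 + w 1 ^ 2 + w 2 ^ 2))
    rw [chartPartial,
      show (fun s => cefaluChart (Function.update w 0 s))
        = fun s : ℂ => (s ^ 4 + (1 + (w 1 ^ 4 + w 2 ^ 4)))
            - (1/4) * (s ^ 2 + (1 + (w 1 ^ 2 + w 2 ^ 2))) ^ 2 from
        funext fun s => by rw [cefaluChart_eq]; simp [Function.update]; try ring,
      derivQ]
    ring
  · show chartPartial w 1 = 4 * w 1 ^ 3 - w 1 * (1 + (w 0 ^ 2 + w 1 ^ 2 + w 2 ^ 2))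
    rw [chartPartial,
      show (fun s => cefaluChart (Function.update w 1 s))
        = fun s : ℂ => (s ^ 4 + (1 + (w 0 ^ 4 + w 2 ^ 4)))
            - (1/4) * (s ^ 2 + (1 + (w 0 ^ 2 + w 2 ^ 2))) ^ 2 from
        funext fun s => by rw [cefaluChart_eq]; simp [Function.update]; try ring,
      derivQ]
    ring
  · show chartPartial w 2 = 4 * w 2 ^ 3 - w 2 * (1 + (w 0 ^ 2 + w 1 ^ 2 + w 2 ^ 2))
    rw [chartPartial,
      show (fun s => cefaluChart (Function.update w 2 s))
        = fun s : ℂ => (s ^ 4 + (1 + (w 0 ^ 4 + w 1 ^ 4)))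
            - (1/4) * (s ^ 2 + (1 + (w 0 ^ 2 + w 1 ^ 2))) ^ 2 from
        funext fun s => by rw [cefaluChart_eq]; simp [Function.update]; try ring,
      derivQ]
    ring

lemma chartHessian_det (w : Fin 3 → ℂ) (h : ∀ i, w i = 1 ∨ w i = -1) :
    (chartHessian w).det = 128 := by
  have d00 : chartHessian w 0 0
      = 12 * w 0 ^ 2 - ((1 + w 1 ^ 2 + w 2 ^ 2) + w 0 ^ 2) - w 0 * (2 * w 0) := by
    show deriv (fun t => chartPartial (Function.update w 0 t) 0) (w 0) = _
    rw [show (fun t => chartPartial (Function.update w 0 t) 0)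
        = fun t : ℂ => 4 * t ^ 3 - t * ((1 + w 1 ^ 2 + w 2 ^ 2) + t ^ 2) from
      funext fun t => by rw [chartPartial_eq]; simp only [Function.update_apply, Fin.reduceEq, reduceIte, if_pos rfl]; ring, derivDiag]
  have d01 : chartHessian w 0 1 = -(w 1) * (2 * w 0) := by
    show deriv (fun t => chartPartial (Function.update w 0 t) 1) (w 0) = _
    rw [show (fun t => chartPartial (Function.update w 0 t) 1)
        = fun t : ℂ => (4 * w 1 ^ 3) - (w 1) * ((1 + w 1 ^ 2 + w 2 ^ 2) + t ^ 2) from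
      funext fun t => by rw [chartPartial_eq]; simp only [Function.update_apply, Fin.reduceEq, reduceIte, if_pos rfl]; ring, derivOff]
  have d02 : chartHessian w 0 2 = -(w 2) * (2 * w 0) := by
    show deriv (fun t => chartPartial (Function.update w 0 t) 2) (w 0) = _
    rw [show (fun t => chartPartial (Function.update w 0 t) 2)
        = fun t : ℂ => (4 * w 2 ^ 3) - (w 2) * ((1 + w 1 ^ 2 + w 2 ^ 2) + t ^ 2) from
      funext fun t => by rw [chartPartial_eq]; simp only [Function.update_apply, Fin.reduceEq, reduceIte, if_pos rfl]; ring, derivOff]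
  have d10 : chartHessian w 1 0 = -(w 0) * (2 * w 1) := by
    show deriv (fun t => chartPartial (Function.update w 1 t) 0) (w 1) = _
    rw [show (fun t => chartPartial (Function.update w 1 t) 0)
        = fun t : ℂ => (4 * w 0 ^ 3) - (w 0) * ((1 + w 0 ^ 2 + w 2 ^ 2) + t ^ 2) from
      funext fun t => by rw [chartPartial_eq]; simp only [Function.update_apply, Fin.reduceEq, reduceIte, if_pos rfl]; ring, derivOff]
  have d11 : chartHessian w 1 1
      = 12 * w 1 ^ 2 - ((1 + w 0 ^ 2 + w 2 ^ 2) + w 1 ^ 2) - w 1 * (2 * w 1) := by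
    show deriv (fun t => chartPartial (Function.update w 1 t) 1) (w 1) = _
    rw [show (fun t => chartPartial (Function.update w 1 t) 1)
        = fun t : ℂ => 4 * t ^ 3 - t * ((1 + w 0 ^ 2 + w 2 ^ 2) + t ^ 2) from
      funext fun t => by rw [chartPartial_eq]; simp only [Function.update_apply, Fin.reduceEq, reduceIte, if_pos rfl]; ring, derivDiag]
  have d12 : chartHessian w 1 2 = -(w 2) * (2 * w 1) := by
    show deriv (fun t => chartPartial (Function.update w 1 t) 2) (w 1) = _
    rw [show (fun t => chartPartial (Function.update w 1 t) 2)
        = fun t : ℂ => (4 * w 2 ^ 3) - (w 2) * ((1 + w 0 ^ 2 + w 2 ^ 2) + t ^ 2) from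
      funext fun t => by rw [chartPartial_eq]; simp only [Function.update_apply, Fin.reduceEq, reduceIte, if_pos rfl]; ring, derivOff]
  have d20 : chartHessian w 2 0 = -(w 0) * (2 * w 2) := by
    show deriv (fun t => chartPartial (Function.update w 2 t) 0) (w 2) = _
    rw [show (fun t => chartPartial (Function.update w 2 t) 0)
        = fun t : ℂ => (4 * w 0 ^ 3) - (w 0) * ((1 + w 0 ^ 2 + w 1 ^ 2) + t ^ 2) from
      funext fun t => by rw [chartPartial_eq]; simp only [Function.update_apply, Fin.reduceEq, reduceIte, if_pos rfl]; ring, derivOff]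
  have d21 : chartHessian w 2 1 = -(w 1) * (2 * w 2) := by
    show deriv (fun t => chartPartial (Function.update w 2 t) 1) (w 2) = _
    rw [show (fun t => chartPartial (Function.update w 2 t) 1)
        = fun t : ℂ => (4 * w 1 ^ 3) - (w 1) * ((1 + w 0 ^ 2 + w 1 ^ 2) + t ^ 2) from
      funext fun t => by rw [chartPartial_eq]; simp only [Function.update_apply, Fin.reduceEq, reduceIte, if_pos rfl]; ring, derivOff]
  have d22 : chartHessian w 2 2
      = 12 * w 2 ^ 2 - ((1 + w 0 ^ 2 + w 1 ^ 2) + w 2 ^ 2) - w 2 * (2 * w 2) := by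
    show deriv (fun t => chartPartial (Function.update w 2 t) 2) (w 2) = _
    rw [show (fun t => chartPartial (Function.update w 2 t) 2)
        = fun t : ℂ => 4 * t ^ 3 - t * ((1 + w 0 ^ 2 + w 1 ^ 2) + t ^ 2) from
      funext fun t => by rw [chartPartial_eq]; simp only [Function.update_apply, Fin.reduceEq, reduceIte, if_pos rfl]; ring, derivDiag]
  rw [Matrix.det_fin_three, d00, d01, d02, d10, d11, d12, d20, d21, d22]
  rcases h 0 with h0 | h0 <;> rcases h 1 with h1 | h1 <;> rcases h 2 with h2 | h2 <;>
    rw [h0, h1, h2] <;> norm_num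

def sgnC (b : Bool) : ℂ := if b then 1 else -1

noncomputable def vecB (b : Fin 3 → Bool) : Fin 4 → ℂ := Fin.cons 1 fun i => sgnC (b i)

lemma vecB_ne (b : Fin 3 → Bool) : vecB b ≠ 0 := by
  intro h
  have h0 := congrFun h 0
  rw [show vecB b 0 = 1 from rfl] at h0
  simp at h0

noncomputable def gmap (b : Fin 3 → Bool) : Projectivization ℂ (Fin 4 → ℂ) :=
  Projectivization.mk ℂ (vecB b) (vecB_ne b)

lemma gmap_inj : Function.Injective gmap := by
  intro b b' h
  rw [gmap, gmap, Projectivization.mk_eq_mk_iff'] at h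
  obtain ⟨a, ha⟩ := h
  have h0 := congrFun ha 0
  rw [Pi.smul_apply, smul_eq_mul, show vecB b' 0 = 1 from rfl,
    show vecB b 0 = 1 from rfl, mul_one] at h0
  rw [h0, one_smul] at ha
  funext i
  have hi : sgnC (b' i) = sgnC (b i) := congrFun ha i.succ
  cases hb : b i <;> cases hb' : b' i <;> rw [hb, hb'] at hi <;> simp [sgnC] at hi ⊢ <;> norm_num at hi

lemma range_eq :
    {x : Projectivization ℂ (Fin 4 → ℂ) |
        ∃ z : Fin 4 → ℂ, ∃ hz : z ≠ 0, z ∈ fourSignPoints ∧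
          x = Projectivization.mk ℂ z hz} = Set.range gmap := by
  classical
  ext x
  simp only [Set.mem_setOf_eq, Set.mem_range]
  constructor
  · rintro ⟨z, hz, hs, rfl⟩
    refine ⟨fun i => if z i.succ = z 0 then true else false, ?_⟩
    rw [gmap, Projectivization.mk_eq_mk_iff']
    have hz0 : z 0 ≠ 0 := by rcases hs 0 with h | h <;> rw [h] <;> norm_num
    refine ⟨(z 0)⁻¹, ?_⟩
    funext j
    rw [Pi.smul_apply, smul_eq_mul]
    refine Fin.cases ?_ (fun i => ?_) j
    · show (z 0)⁻¹ * z 0 = 1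
      exact inv_mul_cancel₀ hz0
    · show (z 0)⁻¹ * z i.succ = sgnC (if z i.succ = z 0 then true else false)
      rcases hs i.succ with h | h <;> rcases hs 0 with h0 | h0 <;>
        rw [h, h0] <;> norm_num [sgnC]
  · rintro ⟨b, rfl⟩
    refine ⟨vecB b, vecB_ne b, fun i => ?_, rfl⟩
    refine Fin.cases ?_ (fun j => ?_) i
    · left; rfl
    · show sgnC (b j) = 1 ∨ sgnC (b j) = -1
      cases b j <;> simp [sgnC]


/-- At `λ = 3/4`, the points `[±1:±1:±1:±1]` give `8` singular points of
`{p_{3/4} = 0}` in `ℙ³`, each an `A₁` node: in the affine chart `{z₀ = 1}` the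
Hessian there is nondegenerate. -/
theorem cefalu_singularities_three_quarters :
    (∀ z ∈ fourSignPoints,
        cefalu (3 / 4) z = 0 ∧ (∀ k, cefaluPartial (3 / 4) z k = 0) ∧
          (chartHessian (fun i => z i.succ / z 0)).det ≠ 0) ∧
      Set.ncard {x : Projectivization ℂ (Fin 4 → ℂ) |
        ∃ z : Fin 4 → ℂ, ∃ hz : z ≠ 0, z ∈ fourSignPoints ∧
          x = Projectivization.mk ℂ z hz} = 8 := by
  constructor
  · intro z hz
    have sq : ∀ i, z i ^ 2 = 1 := fun i => by rcases hz i with h | h <;> rw [h] <;> ring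
    have q4 : ∀ i, z i ^ 4 = 1 := fun i => by
      have h := sq i
      calc z i ^ 4 = (z i ^ 2) ^ 2 := by ring
        _ = 1 := by rw [h]; ring
    refine ⟨?_, ?_, ?_⟩
    · rw [cefalu, Fin.sum_univ_four, Fin.sum_univ_four, q4 0, q4 1, q4 2, q4 3,
        sq 0, sq 1, sq 2, sq 3]
      norm_num
    · intro k
      have c3 : z k ^ 3 = z k := by rcases hz k with h | h <;> rw [h] <;> ring
      rw [cefaluPartial_eq, Fin.sum_univ_four, sq 0, sq 1, sq 2, sq 3, sq k, c3]
      ring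
    · have hw : ∀ i : Fin 3, z i.succ / z 0 = 1 ∨ z i.succ / z 0 = -1 := by
        intro i
        rcases hz i.succ with h | h <;> rcases hz 0 with h0 | h0 <;> rw [h, h0] <;> norm_num
      rw [chartHessian_det _ hw]
      norm_num
  · rw [range_eq, ← Set.image_univ, Set.ncard_image_of_injective _ gmap_inj,
      Set.ncard_univ]
    simp [Nat.card_eq_fintype_card]
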